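/- The three-point phase function S(p₀,p₁,p₂) = −Σ_{cyclic} sinh(2(a₀−a₁))z₂ for points pᵢ=(aᵢ,zᵢ) ∈ ℝ² is invariant under the simultaneous left action of the ax+b group on all three arguments: S(g·p₀, g·p₁, g·p₂) = S(p₀,p₁,p₂) for all g and all triples of points. -/

import Mathlib

/-! Left translation by `g = (c, w)` shifts every `aᵢ` by `c`, so the differences `aᵢ − aⱼ` are
unchanged, and replaces `zᵢ` by `zᵢ + w e^{−2aᵢ}`. Since `S` is linear in the `zᵢ`, it changes by
`w · Σ_cyclic sinh(2(a₀−a₁)) e^{−2a₂}`, and this cyclic sum vanishes: expanding `sinh`, its six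
exponentials cancel in pairs. -/

noncomputable section

/-- The `ax+b`-type group law on `ℝ²`: `(a,z)·(a',z') = (a+a', e^{−2a'}z + z')`. -/
def mul2 (p q : ℝ × ℝ) : ℝ × ℝ := (p.1 + q.1, Real.exp (-2 * q.1) * p.2 + q.2)

/-- The inverse for `mul2`. -/
def inv2 (p : ℝ × ℝ) : ℝ × ℝ := (-p.1, -(Real.exp (2 * p.1) * p.2))

/-- The two-dimensional geodesic symmetry `s_{(a,z)}(a',z') = (2a−a', 2cosh(2(a−a'))z − z')`. -/
def sym2 (p q : ℝ × ℝ) : ℝ × ℝ :=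
  (2 * p.1 - q.1, 2 * Real.cosh (2 * (p.1 - q.1)) * p.2 - q.2)

/-- The three-point phase `S(p₀,p₁,p₂) = Σ_cyclic sinh(2(a₀−a₁))z₂`. -/
def phase3 (p0 p1 p2 : ℝ × ℝ) : ℝ :=
  Real.sinh (2 * (p0.1 - p1.1)) * p2.2 + Real.sinh (2 * (p1.1 - p2.1)) * p0.2
    + Real.sinh (2 * (p2.1 - p0.1)) * p1.2

open Real

theorem sinh_sub_mul_exp_neg (x y z : ℝ) :
    sinh (x - y) * exp (-z) = (exp (x - y - z) - exp (y - x - z)) / 2 := by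
  rw [sinh_eq, div_mul_eq_mul_div, sub_mul, ← exp_add, ← exp_add, ← neg_sub x y]
  ring_nf

theorem sinh_sub_mul_exp_neg_cyclic (x y z : ℝ) :
    sinh (x - y) * exp (-z) + sinh (y - z) * exp (-x) + sinh (z - x) * exp (-y) = 0 := by
  simp only [sinh_sub_mul_exp_neg]
  ring_nf

/-- the phase is invariant under the simultaneous left action of the
`ax+b` group on its three arguments. -/
theorem phase3_invariant (g p0 p1 p2 : ℝ × ℝ) :
    phase3 (mul2 g p0) (mul2 g p1) (mul2 g p2) = phase3 p0 p1 p2 := by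
  have hcyclic := sinh_sub_mul_exp_neg_cyclic (2 * p0.1) (2 * p1.1) (2 * p2.1)
  simp only [← mul_sub, ← neg_mul] at hcyclic
  simp only [phase3, mul2, add_sub_add_left_eq_sub]
  linear_combination g.2 * hcyclic
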